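/- Let E be a directed graph that contains no cycles and has only finitely many splitting pairs of edges. Then for any vertices v and w of E there are at most finitely many finite paths with source w and range v. -/

import Mathlib

/-!
Without cycles a walk never revisits a vertex, so it passes each edge at most once. Walking
from the source `w`, the next edge is forced at every step that does not use a splitting edge,
so a walk from `w` to `v` is determined by the subsequence of its splitting edges: a
repetition-free list from the finite set of splitting edges. There are finitely many of those.
-/

/-- A directed graph: countable sets of vertices and edges, with range and source
maps. -/
structure DGraph : Type 1 where
  V : Type
  E : Type
  countableV : Countable V
  countableE : Countable E
  r : E → V
  s : E → V

namespace DGraph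

/-- `E` is row-finite: every vertex receives only finitely many edges. -/
def RowFinite (G : DGraph) : Prop := ∀ v : G.V, {e : G.E | G.r e = v}.Finite

/-- A source of `E`: a vertex receiving no edges. -/
def IsSource (G : DGraph) (v : G.V) : Prop := ∀ e : G.E, G.r e ≠ v

end DGraph

/-- A (finite or infinite) path in the directed graph `G`.  `edge i` is the
`(i+1)`-st edge of the path (or `none` beyond the end of the path); once `none`
always `none`, so a path is either a vertex (`rng`, with no edges), a finite path,
or an infinite path.  Edges are composed so that `s(edge i) = r(edge (i+1))`. -/
structure LPath (G : DGraph) where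
  rng : G.V
  edge : ℕ → Option G.E
  edge_closed : ∀ i, edge i = none → edge (i + 1) = none
  rng_compat : ∀ e, edge 0 = some e → G.r e = rng
  compat : ∀ i e f, edge i = some e → edge (i + 1) = some f → G.s e = G.r f

namespace LPath

variable {G : DGraph}

/-- The vertex `x(n)` of the path `x` (a junk value, the range, beyond the length
of the path). -/
def vert (x : LPath G) : ℕ → G.V
  | 0 => x.rng
  | n + 1 =>
    match x.edge n with
    | some e => G.s e
    | none => x.rng

/-- `x` is an infinite path, i.e. a member of `E^∞`. -/
def Infinite (x : LPath G) : Prop := ∀ i, (x.edge i).isSome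

/-- `n ≤ |x|`: the first `n` edges of `x` all exist. -/
def LeLen (x : LPath G) (n : ℕ) : Prop := ∀ i, i < n → (x.edge i).isSome

/-- `|x| = n`: `x` is a finite path of length `n`. -/
def LenEq (x : LPath G) (n : ℕ) : Prop := x.edge n = none ∧ x.LeLen n

theorem vert_eq (x : LPath G) (m : ℕ) (e : G.E) (h : x.edge m = some e) :
    G.r e = x.vert m := by
  cases m with
  | zero => exact x.rng_compat e h
  | succ n =>
    cases hn : x.edge n with
    | none => exact absurd h (by simp [x.edge_closed n hn])
    | some f =>
      have hc := x.compat n f e hn h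
      simp only [vert, hn]
      exact hc.symm

/-- The shifted path `σ^m(x)` (meaningful when `m ≤ |x|`). -/
def shift (x : LPath G) (m : ℕ) : LPath G where
  rng := x.vert m
  edge i := x.edge (m + i)
  edge_closed i h := x.edge_closed (m + i) h
  rng_compat e he := x.vert_eq m e he
  compat i e f he hf := x.compat (m + i) e f he hf

/-- `x` is shift equivalent to `y` with lag `n ∈ ℤ`: there are `p, q ∈ ℕ` with
`p - q = n`, `p ≤ |x|`, `q ≤ |y|` and `σ^p(x) = σ^q(y)`. -/
def ShiftEquivLag (x y : LPath G) (n : ℤ) : Prop :=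
  ∃ p q : ℕ, (p : ℤ) - (q : ℤ) = n ∧ x.LeLen p ∧ y.LeLen q ∧ x.shift p = y.shift q

/-- `x` is shift equivalent to `y`. -/
def ShiftEquiv (x y : LPath G) : Prop := ∃ n : ℤ, ShiftEquivLag x y n

/-- `x` belongs to `E^{≤∞}`: it is infinite, or finite with its source a source
of the graph. -/
def Boundary (x : LPath G) : Prop :=
  x.Infinite ∨ ∃ n : ℕ, x.LenEq n ∧ G.IsSource (x.vert n)

/-- `x` is frequently divertable to `[y]`: for every `n ≤ |x|` there is a path in
`x(n)E^{≤∞}` that is shift equivalent to `y`. -/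
def FreqDiv (x y : LPath G) : Prop :=
  ∀ n : ℕ, x.LeLen n → ∃ z : LPath G, z.Boundary ∧ z.rng = x.vert n ∧ ShiftEquiv z y

/-- The segment `x(m, n)` of `x` is a cycle: it is closed (`x(m) = x(n)`) and the
sources `x(i)`, `m < i ≤ n`, of its edges are pairwise distinct. -/
def HasCycleAt (x : LPath G) (m n : ℕ) : Prop :=
  m < n ∧ x.LeLen n ∧ x.vert m = x.vert n ∧
    ∀ i j, m < i → i ≤ n → m < j → j ≤ n → x.vert i = x.vert j → i = j

/-- `x` contains a cycle. -/
def ContainsCycle (x : LPath G) : Prop := ∃ m n, x.HasCycleAt m n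

end LPath

/-- A cycle in `G`: a finite path `α = α_1 ⋯ α_len` (here 0-indexed, and with junk
values of `edge` beyond `len`) of non-zero length with `r(α) = s(α)` and whose edges
have pairwise distinct sources. -/
structure DCycle (G : DGraph) where
  len : ℕ
  len_pos : 0 < len
  edge : ℕ → G.E
  compat : ∀ i, i + 1 < len → G.s (edge i) = G.r (edge (i + 1))
  closed : G.s (edge (len - 1)) = G.r (edge 0)
  distinct : ∀ i j, i < len → j < len → G.s (edge i) = G.s (edge j) → i = j

namespace DCycle

variable {G : DGraph}

/-- `f` is an entry to the cycle `c`: `r(f) = r(c_i)` and `f ≠ c_i` for some `i`. -/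
def IsEntry (c : DCycle G) (f : G.E) : Prop :=
  ∃ i, i < c.len ∧ G.r f = G.r (c.edge i) ∧ f ≠ c.edge i

/-- The edge `f` lies in the cycle `c`. -/
def EdgeMem (c : DCycle G) (f : G.E) : Prop := ∃ i, i < c.len ∧ c.edge i = f

end DCycle

theorem List.finite_setOf_nodup_forall_mem {α : Type*} {T : Set α} (hT : T.Finite) :
    {l : List α | l.Nodup ∧ ∀ a ∈ l, a ∈ T}.Finite := by
  classical
  have := hT.fintype
  refine (Set.finite_range fun l : {l : List T // l.Nodup} => l.1.map Subtype.val).subset ?_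
  rintro l ⟨hnd, hl⟩
  exact ⟨⟨l.pmap Subtype.mk hl, hnd.pmap fun _ _ _ _ => congrArg Subtype.val⟩,
    by simp [List.map_pmap]⟩

namespace DGraph

variable {G : DGraph} {u v : G.V} {e : G.E} {l l₁ l₂ : List G.E}

/-- The edges of a walk from `u` to `v`, listed in the order in which they are traversed,
i.e. the reverse of the paper's order `α_1 ⋯ α_k`. -/
def IsWalk (G : DGraph) : G.V → G.V → List G.E → Prop
  | u, v, [] => u = v
  | u, v, e :: l => G.s e = u ∧ G.IsWalk (G.r e) v l

@[simp]
theorem isWalk_nil : G.IsWalk u v [] ↔ u = v := Iff.rfl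

@[simp]
theorem isWalk_cons : G.IsWalk u v (e :: l) ↔ G.s e = u ∧ G.IsWalk (G.r e) v l := Iff.rfl

theorem isWalk_append :
    G.IsWalk u v (l₁ ++ l₂) ↔ ∃ m, G.IsWalk u m l₁ ∧ G.IsWalk m v l₂ := by
  induction l₁ generalizing u with
  | nil => simp
  | cons e l ih => simp [ih, and_assoc]

theorem isWalk_concat : G.IsWalk u v (l ++ [e]) ↔ G.IsWalk u (G.s e) l ∧ G.r e = v := by
  simp [isWalk_append]

namespace IsWalk

theorem source_getElem_zero (h : G.IsWalk u v l) (hl : 0 < l.length) : G.s l[0] = u := by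
  cases l with
  | nil => simp at hl
  | cons e l => exact h.1

theorem range_getElem_last (h : G.IsWalk u v l) (hl : 0 < l.length) :
    G.r l[l.length - 1] = v := by
  induction l generalizing u with
  | nil => simp at hl
  | cons e l ih =>
    cases l with
    | nil => exact h.2
    | cons f l => simpa using ih h.2 (by simp)

theorem source_getElem_succ (h : G.IsWalk u v l) {i : ℕ} (hi : i + 1 < l.length) :
    G.s l[i + 1] = G.r l[i] := by
  induction l generalizing u i with
  | nil => simp at hi
  | cons e l ih =>
    cases i with
    | zero => exact h.2.source_getElem_zero _
    | succ i => exact ih h.2 _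

theorem drop (h : G.IsWalk u v l) {k : ℕ} (hk : k < l.length) :
    G.IsWalk (G.s l[k]) v (l.drop k) := by
  induction l generalizing u k with
  | nil => simp at hk
  | cons e l ih =>
    cases k with
    | zero => obtain ⟨rfl, h⟩ := h; simpa using h
    | succ k => simpa using ih h.2 (by simpa using hk)

-- `DCycle` lists its edges in the paper's order, the reverse of the order of a walk.
def toDCycle (h : G.IsWalk u u l) (hl : l ≠ []) (hnd : (l.map G.s).Nodup) : DCycle G where
  len := l.length
  len_pos := List.length_pos_iff.2 hl
  edge i := l.getD (l.length - 1 - i) (l.head hl)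
  compat i hi := by
    rw [List.getD_eq_getElem _ _ (by omega), List.getD_eq_getElem _ _ (by omega)]
    simp only [show l.length - 1 - i = l.length - 1 - (i + 1) + 1 by omega]
    exact h.source_getElem_succ _
  closed := by
    have hl : 0 < l.length := List.length_pos_iff.2 hl
    rw [List.getD_eq_getElem _ _ (by omega), List.getD_eq_getElem _ _ (by omega)]
    simp only [Nat.sub_self, Nat.sub_zero]
    rw [h.source_getElem_zero hl, h.range_getElem_last hl]
  distinct i j hi hj hij := by
    rw [List.getD_eq_getElem _ _ (by omega), List.getD_eq_getElem _ _ (by omega)] at hij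
    have := (hnd.getElem_inj_iff (i := l.length - 1 - i) (j := l.length - 1 - j)
      (hi := by simp; omega) (hj := by simp; omega)).1 (by simpa using hij)
    omega

variable [IsEmpty (DCycle G)]

theorem eq_nil_of_nodup_map_source (h : G.IsWalk u u l) (hnd : (l.map G.s).Nodup) :
    l = [] := by
  by_contra hl
  exact IsEmpty.false (h.toDCycle hl hnd)

theorem nodup_map_source (h : G.IsWalk u v l) : (l.map G.s).Nodup := by
  induction l using List.reverseRecOn generalizing v with
  | nil => simp
  | append_singleton l e ih =>
    obtain ⟨h, -⟩ := isWalk_concat.1 h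
    rw [List.map_append, List.map_singleton, List.nodup_append_comm, List.singleton_append,
      List.nodup_cons]
    refine ⟨fun hmem => ?_, ih h⟩
    obtain ⟨k, hk, hke⟩ := List.getElem_of_mem hmem
    simp only [List.getElem_map, List.length_map] at hke hk
    have hclosed : G.IsWalk (G.s l[k]) (G.s l[k]) (l.drop k) := hke ▸ h.drop hk
    have hdrop := hclosed.eq_nil_of_nodup_map_source
      (List.map_drop .. ▸ (ih h).sublist (List.drop_sublist _ _))
    exact absurd (List.drop_eq_nil_iff.1 hdrop) (by omega)

theorem nodup (h : G.IsWalk u v l) : l.Nodup :=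
  h.nodup_map_source.of_map G.s

theorem eq_nil_of_closed (h : G.IsWalk u u l) : l = [] :=
  h.eq_nil_of_nodup_map_source h.nodup_map_source

theorem eq_of_filter_eq {p : G.E → Bool} (hp : ∀ e f, e ≠ f → G.s e = G.s f → p e)
    (h₁ : G.IsWalk u v l₁) (h₂ : G.IsWalk u v l₂) (hf : l₁.filter p = l₂.filter p) :
    l₁ = l₂ := by
  induction l₁ generalizing u l₂ with
  | nil =>
    subst h₁
    exact h₂.eq_nil_of_closed.symm
  | cons e l₁ ih =>
    cases l₂ with
    | nil =>
      subst h₂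
      exact h₁.eq_nil_of_closed
    | cons f l₂ =>
      have hsource : G.s e = G.s f := h₁.1.trans h₂.1.symm
      obtain rfl : e = f := by
        by_contra hef
        simp [hp e f hef hsource, hp f e (Ne.symm hef) hsource.symm, hef] at hf
      rw [ih h₁.2 h₂.2 (by by_cases hpe : p e <;> simpa [List.filter_cons, hpe] using hf)]

end IsWalk

theorem finite_setOf_isWalk [IsEmpty (DCycle G)]
    (hsp : {p : G.E × G.E | p.1 ≠ p.2 ∧ G.s p.1 = G.s p.2}.Finite) (u v : G.V) :
    {l | G.IsWalk u v l}.Finite := by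
  classical
  set T := Prod.fst '' {p : G.E × G.E | p.1 ≠ p.2 ∧ G.s p.1 = G.s p.2}
  refine Set.Finite.of_finite_image (f := List.filter (· ∈ T))
    ((List.finite_setOf_nodup_forall_mem (hsp.image Prod.fst)).subset ?_) ?_
  · rintro _ ⟨l, hl, rfl⟩
    exact ⟨hl.nodup.filter _, fun e he => of_decide_eq_true (List.mem_filter.1 he).2⟩
  · intro l₁ h₁ l₂ h₂ hf
    exact IsWalk.eq_of_filter_eq (fun e f hef hs => decide_eq_true ⟨(e, f), ⟨hef, hs⟩, rfl⟩)
      h₁ h₂ hf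

end DGraph

namespace LPath

variable {G : DGraph} {x : LPath G} {n : ℕ}

theorem ext {y : LPath G} (hr : x.rng = y.rng) (he : x.edge = y.edge) : x = y := by
  cases x; cases y; cases hr; cases he; rfl

theorem LenEq.edge_eq_none (h : x.LenEq n) {i : ℕ} (hi : n ≤ i) : x.edge i = none := by
  induction i, hi using Nat.le_induction with
  | base => exact h.1
  | succ i _ ih => exact x.edge_closed i ih

theorem exists_isWalk_of_leLen (h : x.LeLen n) :
    ∃ l : List G.E, G.IsWalk (x.vert n) x.rng l ∧ l.length = n ∧
      ∀ i < n, x.edge i = l.reverse[i]? := by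
  induction n with
  | zero => exact ⟨[], rfl, rfl, by simp⟩
  | succ n ih =>
    obtain ⟨e, he⟩ := Option.isSome_iff_exists.1 (h n n.lt_succ_self)
    obtain ⟨l, hl, hlen, hedge⟩ := ih fun i hi => h i (by omega)
    refine ⟨e :: l, ⟨by simp [vert, he], x.vert_eq n e he ▸ hl⟩, by simp [hlen], fun i hi => ?_⟩
    rcases Nat.lt_succ_iff_lt_or_eq.1 hi with hi | rfl
    · simp [List.getElem?_append_left, hlen, hi, hedge i hi]
    · simp [he, hlen]

theorem exists_isWalk_of_lenEq (h : x.LenEq n) :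
    ∃ l : List G.E, G.IsWalk (x.vert n) x.rng l ∧ x.edge = fun i => l.reverse[i]? := by
  obtain ⟨l, hl, hlen, hedge⟩ := exists_isWalk_of_leLen h.2
  refine ⟨l, hl, funext fun i => ?_⟩
  rcases lt_or_ge i n with hi | hi
  · exact hedge i hi
  · rw [h.edge_eq_none hi, eq_comm, List.getElem?_eq_none]
    simpa [hlen]

end LPath

/-- Let `E` be a directed graph with no cycles and only finitely many splitting pairs
of edges (pairs of distinct edges with a common source).  Then for any vertices `v`
and `w` there are at most finitely many finite paths with source `w` and range `v`. -/
theorem stmt18 (G : DGraph) (hnc : IsEmpty (DCycle G))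
    (hsp : {p : G.E × G.E | p.1 ≠ p.2 ∧ G.s p.1 = G.s p.2}.Finite)
    (v w : G.V) :
    {x : LPath G | x.rng = v ∧ ∃ n : ℕ, x.LenEq n ∧ x.vert n = w}.Finite := by
  refine Set.Finite.of_finite_image (f := LPath.edge)
    (((G.finite_setOf_isWalk hsp w v).image fun l i => l.reverse[i]?).subset ?_) ?_
  · rintro _ ⟨x, ⟨rfl, n, hn, rfl⟩, rfl⟩
    obtain ⟨l, hl, hedge⟩ := LPath.exists_isWalk_of_lenEq hn
    exact ⟨l, hl, hedge.symm⟩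
  · rintro x ⟨hx, -⟩ y ⟨hy, -⟩ hxy
    exact LPath.ext (hx.trans hy.symm) hxy
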